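/- arXiv:1909.03096 — 3 statements merged into one kernel-verified Lean document; each statement's English description precedes it below -/
import Mathlib

section
/- Let n ≥ 2 and let F : ℝⁿ → ℝ be positively 1-homogeneous, positive on nonzero vectors, and continuously differentiable on ℝⁿ \ {0}. If v ∈ ℝⁿ is nonzero and is NOT a vertical contact point of F and the Euclidean norm, then the n torsion-type tensors σ₁(v), …, σₙ(v), where σᵢ(v) has components σ_{c;i}^{ab}(v) for a < b, are linearly independent in the n·binom(n,2)-dimensional space of torsion-type tensors; equivalently, the matrix with rows indexed by i and columns indexed by triples (a,b,c) with a<b, whose entries are σ_{c;i}^{ab}(v), has rank n. -/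
/-- The `r`-th partial derivative of `F` at `v`. -/
noncomputable def pd {n : ℕ} (F : EuclideanSpace ℝ (Fin n) → ℝ)
    (v : EuclideanSpace ℝ (Fin n)) (r : Fin n) : ℝ :=
  fderiv ℝ F v (EuclideanSpace.single r 1)

/-- The coefficient `σ_{c;i}^{ab}(v)` (with respect to an orthonormal basis).
The tensor `σᵢ(v)` is the torsion-type tensor whose `(a,b,c)` component is
`sigmaT F v a b c i`; it is antisymmetric in `a, b`. -/
noncomputable def sigmaT {n : ℕ} (F : EuclideanSpace ℝ (Fin n) → ℝ)
    (v : EuclideanSpace ℝ (Fin n)) (a b c i : Fin n) : ℝ :=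
  (1 / 2) * ((if i = c then (1 : ℝ) else 0) * (v a * pd F v b - v b * pd F v a)
    + (if i = a then (1 : ℝ) else 0) * (v c * pd F v b - v b * pd F v c)
    - (if i = b then (1 : ℝ) else 0) * (v c * pd F v a - v a * pd F v c))

/-! With `w = ∇F(v)` and `M_ab = v_a w_b - v_b w_a`, the `(a,b,c)` component of `∑ gᵢ σᵢ(v)` is
`(g_c M_ab + g_a M_cb - g_b M_ca) / 2`. If some `M_ab ≠ 0`, the components `(a,b,a)`, `(a,b,b)` and
then `(a,b,c)` force `g_a = g_b = g_c = 0`. If all `M_ab` vanish, `w` is parallel to `v`, and Euler's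
identity `⟨v, w⟩ = F(v)` for the homogeneous `F` fixes the factor to `F(v) / ‖v‖²`: `v` is then a
vertical contact point. -/

open Finset

theorem sum_sq_mul_eq_sum_mul_mul_of_forall_mul_comm {ι R : Type*} [Fintype ι] [CommRing R]
    {v w : ι → R} (h : ∀ a b, v a * w b = v b * w a) (r : ι) :
    (∑ i, v i ^ 2) * w r = (∑ i, v i * w i) * v r := by
  rw [sum_mul, sum_mul]
  exact sum_congr rfl fun i _ => by linear_combination v i * h i r

theorem fderiv_apply_self_of_posHomogeneous {E G : Type*} [NormedAddCommGroup E]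
    [NormedSpace ℝ E] [NormedAddCommGroup G] [NormedSpace ℝ G] {F : E → G} {v : E}
    (hhom : ∀ t : ℝ, 0 < t → F (t • v) = t • F v) (hF : DifferentiableAt ℝ F v) :
    fderiv ℝ F v v = F v := by
  have hray : HasDerivAt (fun t : ℝ => F (t • v)) (fderiv ℝ F v v) 1 := by
    refine HasFDerivAt.comp_hasDerivAt (f := fun t : ℝ => t • v) 1 ?_ ?_
    · rw [one_smul]; exact hF.hasFDerivAt
    · simpa using (hasDerivAt_id (1 : ℝ)).smul_const v
  have hlin : HasDerivAt (fun t : ℝ => F (t • v)) (F v) 1 := by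
    refine HasDerivAt.congr_of_eventuallyEq (f := fun t : ℝ => t • F v) ?_ ?_
    · simpa using (hasDerivAt_id (1 : ℝ)).smul_const (F v)
    · filter_upwards [eventually_gt_nhds one_pos] with t ht using hhom t ht
  exact hray.unique hlin

theorem EuclideanSpace.apply_eq_sum_smul_apply_single {ι M : Type*} [Fintype ι] [DecidableEq ι]
    [AddCommGroup M] [Module ℝ M] [TopologicalSpace M] (L : EuclideanSpace ℝ ι →L[ℝ] M)
    (x : EuclideanSpace ℝ ι) :
    L x = ∑ i, x i • L (EuclideanSpace.single i 1) := by
  conv_lhs => rw [← (EuclideanSpace.basisFun ι ℝ).toBasis.sum_repr x]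
  simp [map_sum]

theorem sum_mul_sigmaT {n : ℕ} (F : EuclideanSpace ℝ (Fin n) → ℝ)
    (v : EuclideanSpace ℝ (Fin n)) (g : Fin n → ℝ) (a b c : Fin n) :
    ∑ i, g i * sigmaT F v a b c i = (g c * (v a * pd F v b - v b * pd F v a)
      + g a * (v c * pd F v b - v b * pd F v c) - g b * (v c * pd F v a - v a * pd F v c)) / 2 := by
  simp only [sigmaT, mul_sub, mul_add, ← mul_assoc, mul_ite, mul_one, mul_zero]
  simp only [one_div, ite_mul, zero_mul, sum_sub_distrib, sum_add_distrib, sum_ite_eq', mem_univ,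
    ↓reduceIte]
  ring

theorem linearIndependent_sigmaT {n : ℕ} (F : EuclideanSpace ℝ (Fin n) → ℝ)
    (v : EuclideanSpace ℝ (Fin n)) {a b : Fin n} (hab : v a * pd F v b - v b * pd F v a ≠ 0) :
    LinearIndependent ℝ
      (fun i : Fin n => (fun a b c => sigmaT F v a b c i : Fin n → Fin n → Fin n → ℝ)) := by
  rw [Fintype.linearIndependent_iff]
  intro g hg
  have hcomp : ∀ a' b' c', ∑ i, g i * sigmaT F v a' b' c' i = 0 := fun a' b' c' => by
    simpa using congrFun (congrFun (congrFun hg a') b') c'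
  simp only [sum_mul_sigmaT] at hcomp
  have hga : g a = 0 := by
    refine (mul_eq_zero.mp ?_).resolve_right hab
    linear_combination hcomp a b a
  have hgb : g b = 0 := by
    refine (mul_eq_zero.mp ?_).resolve_right hab
    linear_combination hcomp a b b
  intro c
  refine (mul_eq_zero.mp ?_).resolve_right hab
  linear_combination 2 * hcomp a b c - (v c * pd F v b - v b * pd F v c) * hga
    + (v c * pd F v a - v a * pd F v c) * hgb

theorem sigma_linearIndependent_general {n : ℕ}
    (F : EuclideanSpace ℝ (Fin n) → ℝ)
    (hhom : ∀ t : ℝ, 0 < t → ∀ v, F (t • v) = t * F v)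
    (hdiff : ContDiffOn ℝ 1 F {(0 : EuclideanSpace ℝ (Fin n))}ᶜ)
    (v : EuclideanSpace ℝ (Fin n)) (hv : v ≠ 0)
    (hnvc : ¬ ∀ r, pd F v r = (F v / ‖v‖ ^ 2) * v r) :
    LinearIndependent ℝ
      (fun i : Fin n => (fun a b c => sigmaT F v a b c i : Fin n → Fin n → Fin n → ℝ)) := by
  have hFv : DifferentiableAt ℝ F v :=
    (hdiff.differentiableOn one_ne_zero).differentiableAt (isOpen_compl_singleton.mem_nhds hv)
  have heuler : ∑ r, v r * pd F v r = F v := by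
    rw [← fderiv_apply_self_of_posHomogeneous (fun t ht => hhom t ht v) hFv,
      EuclideanSpace.apply_eq_sum_smul_apply_single (fderiv ℝ F v)]
    rfl
  obtain ⟨a, b, hab⟩ : ∃ a b, v a * pd F v b - v b * pd F v a ≠ 0 := by
    by_contra! hpar
    refine hnvc fun r => ?_
    have hscale := sum_sq_mul_eq_sum_mul_mul_of_forall_mul_comm
      (fun a b => sub_eq_zero.mp (hpar a b)) r
    rw [heuler, ← EuclideanSpace.real_norm_sq_eq] at hscale
    have hnorm : ‖v‖ ^ 2 ≠ 0 := by positivity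
    field_simp
    linear_combination hscale
  exact linearIndependent_sigmaT F v hab

/-- If the nonzero `v` is not a vertical contact point of `F` and the Euclidean norm,
then the torsion-type tensors `σ₁(v), …, σₙ(v)` are linearly independent (equivalently,
the matrix of coefficients `σ_{c;i}^{ab}(v)` has rank `n`). -/
theorem sigma_linearIndependent {n : ℕ} (hn : 2 ≤ n)
    (F : EuclideanSpace ℝ (Fin n) → ℝ)
    (hhom : ∀ t : ℝ, 0 < t → ∀ v, F (t • v) = t * F v)
    (hpos : ∀ v : EuclideanSpace ℝ (Fin n), v ≠ 0 → 0 < F v)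
    (hdiff : ContDiffOn ℝ 1 F {(0 : EuclideanSpace ℝ (Fin n))}ᶜ)
    (v : EuclideanSpace ℝ (Fin n)) (hv : v ≠ 0)
    (hnvc : ¬ ∀ r, pd F v r = (F v / ‖v‖ ^ 2) * v r) :
    LinearIndependent ℝ
      (fun i : Fin n => (fun a b c => sigmaT F v a b c i : Fin n → Fin n → Fin n → ℝ)) :=
  sigma_linearIndependent_general F hhom hdiff v hv hnvc
end

section
/- Let F : ℝⁿ × ℝⁿ → ℝ (written F(x,y)) be continuously differentiable at all points (x,y) with y ≠ 0, and let Γ : ℝⁿ → ℝ^{n×n×n} be a continuous family of connection coefficients. Then the following are equivalent: (i) for every continuously differentiable curve c : [0,1] → ℝⁿ and every continuously differentiable, nowhere-vanishing vector field X : [0,1] → ℝⁿ along c that is parallel, i.e. (Xᵏ)'(t) = −Σ_{i,j} (cⁱ)'(t)·Xʲ(t)·Γᵏᵢⱼ(c(t)) for all t, the function t ↦ F(c(t), X(t)) is constant on [0,1]; (ii) for all x ∈ ℝⁿ, all y ≠ 0, and all i = 1,…,n: ∂F/∂xⁱ(x,y) − Σ_{j,k} yʲ·Γᵏᵢⱼ(x)·∂F/∂yᵏ(x,y)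 = 0. -/
/-!
By the chain rule, along a curve `c` carrying a parallel field `X`,
`d/dt F(c, X) = Σᵢ (cⁱ)' · (∂F/∂xⁱ − Σ_{j,k} Xʲ Γᵏᵢⱼ ∂F/∂yᵏ)(c, X)`,
so the compatibility equations make `F(c, X)` constant. Conversely, fix `x`, `y ≠ 0` and `i`.
Picard–Lindelöf solves the parallel transport equation along `s ↦ x + s eᵢ` with initial value
`y` for small `|s|`; reparametrizing by `s = δ sin t` turns this into a curve and a parallel
field defined on all of `ℝ`. The derivative of the constant function `F(c, X)` at `t = 0` is
`δ` times the `i`-th compatibility expression at `(x, y)`.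
-/

open Finset

/-- The partial derivative `∂F/∂xⁱ(x,y)` of `F : ℝⁿ × ℝⁿ → ℝ`. -/
noncomputable def pdx {n : ℕ} (F : (Fin n → ℝ) × (Fin n → ℝ) → ℝ)
    (x y : Fin n → ℝ) (i : Fin n) : ℝ :=
  fderiv ℝ F (x, y) (Pi.single i 1, 0)

/-- The partial derivative `∂F/∂yᵏ(x,y)` of `F : ℝⁿ × ℝⁿ → ℝ`. -/
noncomputable def pdy {n : ℕ} (F : (Fin n → ℝ) × (Fin n → ℝ) → ℝ)
    (x y : Fin n → ℝ) (k : Fin n) : ℝ :=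
  fderiv ℝ F (x, y) (0, Pi.single k 1)

section LinearODE

variable {E : Type*} [NormedAddCommGroup E] [NormedSpace ℝ E] [CompleteSpace E]
  {A : ℝ → E →L[ℝ] E}

theorem exists_hasDerivAt_linear_ode (hA : Continuous A) (y₀ : E) :
    ∃ ε > 0, ∃ Y : ℝ → E, Y 0 = y₀ ∧ ∀ s ∈ Set.Ioo (-ε) ε, HasDerivAt Y (A s (Y s)) s := by
  obtain ⟨M, hM⟩ := (isCompact_Icc (a := (-1 : ℝ)) (b := 1)).exists_bound_of_continuousOn
    hA.continuousOn
  have hM₀ : 0 ≤ M := (norm_nonneg _).trans (hM 0 (by norm_num))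
  set L := M * (‖y₀‖ + 1)
  have hL₀ : 0 ≤ L := by positivity
  set ε := min 1 (1 / (L + 1))
  have hε₀ : 0 < ε := lt_min one_pos (by positivity)
  have hεL : L * ε ≤ 1 := by
    calc L * ε ≤ L * (1 / (L + 1)) := by gcongr; exact min_le_right _ _
      _ ≤ 1 := by rw [mul_one_div, div_le_one (by positivity)]; linarith
  have hsub : Set.Icc (-ε) ε ⊆ Set.Icc (-1) 1 :=
    Set.Icc_subset_Icc (neg_le_neg (min_le_left _ _)) (min_le_left _ _)
  have hpl : IsPicardLindelof (fun s => A s) (tmin := -ε) (tmax := ε) ⟨0, by simp [hε₀.le]⟩ y₀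
      1 0 ⟨L, hL₀⟩ ⟨M, hM₀⟩ := by
    refine ⟨fun s hs => ?_, fun z _ => (hA.clm_apply continuous_const).continuousOn,
      fun s hs z hz => ?_, ?_⟩
    · exact ((A s).lipschitz.weaken (by exact_mod_cast (hM s (hsub hs)))).lipschitzOnWith
    · have hz' : ‖z‖ ≤ ‖y₀‖ + 1 := by
        have : ‖z - y₀‖ ≤ 1 := by simpa using mem_closedBall_iff_norm.mp hz
        linarith [norm_le_norm_add_norm_sub' z y₀]
      calc ‖A s z‖ ≤ ‖A s‖ * ‖z‖ := (A s).le_opNorm z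
        _ ≤ L := mul_le_mul (hM s (hsub hs)) hz' (norm_nonneg _) hM₀
    · simp only [NNReal.coe_one, NNReal.coe_zero, sub_zero, zero_sub, neg_neg, max_self]
      exact hεL
  obtain ⟨Y, hY₀, hY⟩ := hpl.exists_eq_forall_mem_Icc_hasDerivWithinAt₀
  exact ⟨ε, hε₀, Y, hY₀, fun s hs =>
    (hY s (Set.Ioo_subset_Icc_self hs)).hasDerivAt (Icc_mem_nhds hs.1 hs.2)⟩

theorem exists_contDiff_ne_zero_hasDerivAt_linear_ode_sin (hA : Continuous A) {y₀ : E}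
    (hy₀ : y₀ ≠ 0) :
    ∃ δ ≠ 0, ∃ X : ℝ → E, X 0 = y₀ ∧ ContDiff ℝ 1 X ∧ (∀ t, X t ≠ 0) ∧
      ∀ t, HasDerivAt X ((δ * Real.cos t) • A (δ * Real.sin t) (X t)) t := by
  obtain ⟨ε, hε, Y, hY₀, hY⟩ := exists_hasDerivAt_linear_ode hA y₀
  -- `X := Y ∘ (ρ/2 · sin)` with `ρ` so small that `Y` exists and does not vanish on `(-ρ, ρ)`.
  have hY_ne : ∀ᶠ s in nhds (0 : ℝ), s ∈ Set.Ioo (-ε) ε ∧ Y s ≠ 0 :=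
    Filter.Eventually.and (Ioo_mem_nhds (neg_lt_zero.mpr hε) hε)
      ((hY 0 ⟨neg_lt_zero.mpr hε, hε⟩).continuousAt.eventually_ne (hY₀ ▸ hy₀))
  obtain ⟨ρ, hρ, hρY⟩ := Metric.eventually_nhds_iff.mp hY_ne
  have hmem : ∀ t, dist (ρ / 2 * Real.sin t) 0 < ρ := fun t => by
    rw [Real.dist_0_eq_abs, abs_mul, abs_of_pos (half_pos hρ)]
    nlinarith [Real.abs_sin_le_one t]
  have hX : ∀ t, HasDerivAt (fun t => Y (ρ / 2 * Real.sin t))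
      ((ρ / 2 * Real.cos t) • A (ρ / 2 * Real.sin t) (Y (ρ / 2 * Real.sin t))) t := fun t =>
    (hY _ (hρY (hmem t)).1).scomp t ((Real.hasDerivAt_sin t).const_mul _)
  refine ⟨ρ / 2, (half_pos hρ).ne', _, by simpa using hY₀, ?_, fun t => (hρY (hmem t)).2, hX⟩
  rw [contDiff_one_iff_deriv]
  refine ⟨fun t => (hX t).differentiableAt, ?_⟩
  rw [funext fun t => (hX t).deriv]
  have hYc : Continuous fun t => Y (ρ / 2 * Real.sin t) :=
    continuous_iff_continuousAt.mpr fun t => (hX t).continuousAt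
  exact (continuous_const.mul Real.continuous_cos).smul
    ((hA.comp (continuous_const.mul Real.continuous_sin)).clm_apply hYc)

end LinearODE

theorem ContinuousLinearMap.apply_prod_eq_sum {n : ℕ}
    (L : (Fin n → ℝ) × (Fin n → ℝ) →L[ℝ] ℝ) (a b : Fin n → ℝ) :
    L (a, b) = ∑ i, a i * L (Pi.single i 1, 0) + ∑ k, b k * L (0, Pi.single k 1) := by
  conv_lhs => rw [← L.comp_inl_add_comp_inr, pi_eq_sum_univ' a, pi_eq_sum_univ' b]
  simp

theorem ContDiffOn.differentiableAt_of_snd_ne_zero {E V G : Type*} [NormedAddCommGroup E]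
    [NormedSpace ℝ E] [NormedAddCommGroup V] [NormedSpace ℝ V] [NormedAddCommGroup G]
    [NormedSpace ℝ G] {F : E × V → G} (hF : ContDiffOn ℝ 1 F {p | p.2 ≠ 0}) {p : E × V}
    (hp : p.2 ≠ 0) : DifferentiableAt ℝ F p :=
  (hF.contDiffAt ((isOpen_ne_fun continuous_snd continuous_const).mem_nhds hp)).differentiableAt
    one_ne_zero

theorem HasDerivAt.eq_zero_of_forall_mem_Icc_eq {E : Type*} [NormedAddCommGroup E]
    [NormedSpace ℝ E] {f : ℝ → E} {f' : E} {a b : ℝ} (hf : HasDerivAt f f' a) (hab : a < b)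
    (hconst : ∀ t ∈ Set.Icc a b, f t = f a) : f' = 0 :=
  (uniqueDiffOn_Icc hab a (Set.left_mem_Icc.mpr hab.le)).eq_deriv _ hf.hasDerivWithinAt
    ((hasDerivWithinAt_const a _ (f a)).congr hconst rfl)

section Finsler

variable {n : ℕ} (F : (Fin n → ℝ) × (Fin n → ℝ) → ℝ)
  (Γ : (Fin n → ℝ) → Fin n → Fin n → Fin n → ℝ)

/-- The velocity of a parallel field with value `y` along a curve through `x` with velocity `a`. -/
def parallelRate (x a y : Fin n → ℝ) : Fin n → ℝ :=
  fun k => -∑ i, ∑ j, a i * y j * Γ x i j k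

theorem parallelRate_smul (x a y : Fin n → ℝ) (r : ℝ) :
    parallelRate Γ x (r • a) y = r • parallelRate Γ x a y := by
  ext k
  simp only [parallelRate, Pi.smul_apply, smul_eq_mul, mul_sum, mul_neg, mul_assoc]

noncomputable def parallelRateCLM (x a : Fin n → ℝ) : (Fin n → ℝ) →L[ℝ] (Fin n → ℝ) :=
  LinearMap.toContinuousLinearMap
    { toFun := parallelRate Γ x a
      map_add' := fun y z => by
        ext k
        simp only [parallelRate, Pi.add_apply, mul_add, add_mul, sum_add_distrib, neg_add]
      map_smul' := fun r y => by
        ext k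
        simp only [parallelRate, Pi.smul_apply, smul_eq_mul, RingHom.id_apply, mul_sum,
          mul_neg]
        exact congrArg Neg.neg (sum_congr rfl fun i _ => sum_congr rfl fun j _ => by ring) }

@[simp]
theorem parallelRateCLM_apply (x a y : Fin n → ℝ) :
    parallelRateCLM Γ x a y = parallelRate Γ x a y :=
  rfl

variable {Γ} in
theorem continuous_parallelRateCLM (hΓ : Continuous Γ) (a : Fin n → ℝ) :
    Continuous fun x => parallelRateCLM Γ x a := by
  refine continuous_clm_apply.mpr fun y => ?_
  simp only [parallelRateCLM_apply]
  exact continuous_pi fun k => by unfold parallelRate; fun_prop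

theorem fderiv_apply_parallelRate (x y a : Fin n → ℝ) :
    fderiv ℝ F (x, y) (a, parallelRate Γ x a y) =
      ∑ i, a i * (pdx F x y i - ∑ j, ∑ k, y j * Γ x i j k * pdy F x y k) := by
  rw [ContinuousLinearMap.apply_prod_eq_sum]
  simp only [parallelRate, pdx, pdy, mul_sub, sum_sub_distrib, mul_sum, sum_mul, neg_mul,
    sum_neg_distrib, ← sub_eq_add_neg]
  congr 1
  rw [sum_comm]
  refine sum_congr rfl fun i _ => ?_
  rw [sum_comm]
  exact sum_congr rfl fun j _ => sum_congr rfl fun k _ => by ring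

def IsParallelOn (c X : ℝ → Fin n → ℝ) (s : Set ℝ) : Prop :=
  ∀ t ∈ s, ∀ k, deriv (fun r => X r k) t =
    - ∑ i, ∑ j, deriv (fun r => c r i) t * X t j * Γ (c t) i j k

def ParallelTransportPreserves : Prop :=
  ∀ c X : ℝ → Fin n → ℝ, ContDiff ℝ 1 c → ContDiff ℝ 1 X →
    (∀ t ∈ Set.Icc (0 : ℝ) 1, X t ≠ 0) → IsParallelOn Γ c X (Set.Icc 0 1) →
    ∀ s ∈ Set.Icc (0 : ℝ) 1, ∀ t ∈ Set.Icc (0 : ℝ) 1, F (c s, X s) = F (c t, X t)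

def IsCompatible : Prop :=
  ∀ x y : Fin n → ℝ, y ≠ 0 → ∀ i, pdx F x y i - ∑ j, ∑ k, y j * Γ x i j k * pdy F x y k = 0

variable {F Γ}

theorem IsCompatible.parallelTransportPreserves
    (hF : ContDiffOn ℝ 1 F {p : (Fin n → ℝ) × (Fin n → ℝ) | p.2 ≠ 0})
    (hcomp : IsCompatible F Γ) : ParallelTransportPreserves F Γ := by
  intro c X hc hX hX₀ hpar
  have hderiv : ∀ u ∈ Set.Icc (0 : ℝ) 1, HasDerivAt (fun s => F (c s, X s)) 0 u := by
    intro u hu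
    have hc' := (hc.differentiable one_ne_zero u).hasDerivAt
    have hX' := (hX.differentiable one_ne_zero u).hasDerivAt
    have hXpar : deriv X u = parallelRate Γ (c u) (deriv c u) (X u) := by
      ext k
      rw [← (hasDerivAt_pi.mp hX' k).deriv, hpar u hu k]
      simp only [parallelRate, fun i => (hasDerivAt_pi.mp hc' i).deriv]
    have hFcX := (hF.differentiableAt_of_snd_ne_zero (hX₀ u hu)).hasFDerivAt.comp_hasDerivAt u
      (hc'.prodMk hX')
    rwa [hXpar, fderiv_apply_parallelRate,
      sum_eq_zero fun i _ => by rw [hcomp _ _ (hX₀ u hu) i, mul_zero]] at hFcX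
  have hconst := constant_of_has_deriv_right_zero
    (fun u hu => (hderiv u hu).continuousAt.continuousWithinAt)
    (fun u hu => (hderiv u (Set.Ico_subset_Icc_self hu)).hasDerivWithinAt)
  intro s hs t ht
  rw [hconst s hs, hconst t ht]

theorem ParallelTransportPreserves.isCompatible
    (hF : ContDiffOn ℝ 1 F {p : (Fin n → ℝ) × (Fin n → ℝ) | p.2 ≠ 0}) (hΓ : Continuous Γ)
    (hpres : ParallelTransportPreserves F Γ) : IsCompatible F Γ := by
  intro x y hy i
  set e : Fin n → ℝ := Pi.single i 1
  obtain ⟨δ, hδ, X, hX₀, hX, hX_ne, hX'⟩ := exists_contDiff_ne_zero_hasDerivAt_linear_ode_sin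
    ((continuous_parallelRateCLM hΓ e).comp (by fun_prop : Continuous fun s : ℝ => x + s • e)) hy
  set c : ℝ → Fin n → ℝ := fun t => x + (δ * Real.sin t) • e
  have hc' : ∀ t, HasDerivAt c ((δ * Real.cos t) • e) t := fun t =>
    (((Real.hasDerivAt_sin t).const_mul δ).smul_const e).const_add x
  replace hX' : ∀ t, HasDerivAt X (parallelRate Γ (c t) ((δ * Real.cos t) • e) (X t)) t := by
    simpa [parallelRate_smul] using hX'
  have hpar : IsParallelOn Γ c X (Set.Icc 0 1) := fun t _ k => by
    rw [(hasDerivAt_pi.mp (hX' t) k).deriv]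
    simp only [parallelRate, fun i => (hasDerivAt_pi.mp (hc' t) i).deriv]
  have hconst := hpres c X (by fun_prop) hX (fun t _ => hX_ne t) hpar
  have hFcX := (hF.differentiableAt_of_snd_ne_zero (hX₀ ▸ hX_ne 0)).hasFDerivAt.comp_hasDerivAt 0
    ((hc' 0).prodMk (hX' 0))
  simp only [c, hX₀, Real.sin_zero, Real.cos_zero, mul_zero, mul_one, zero_smul, add_zero,
    fderiv_apply_parallelRate] at hFcX
  have hzero := hFcX.eq_zero_of_forall_mem_Icc_eq one_pos fun t ht => hconst t ht 0 (by simp)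
  simpa [e, Pi.single_apply, hδ] using hzero

end Finsler

/-- Parallel transports with respect to `Γ` preserve the Finslerian length of tangent
vectors if and only if `∂F/∂xⁱ − Σ_{j,k} yʲ·Γᵏᵢⱼ·∂F/∂yᵏ = 0` holds for `y ≠ 0`. -/
theorem parallel_preserves_iff_compatible {n : ℕ}
    (F : (Fin n → ℝ) × (Fin n → ℝ) → ℝ)
    (hF : ContDiffOn ℝ 1 F {p : (Fin n → ℝ) × (Fin n → ℝ) | p.2 ≠ 0})
    (Γ : (Fin n → ℝ) → Fin n → Fin n → Fin n → ℝ)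
    (hΓ : Continuous Γ) :
    (∀ c X : ℝ → Fin n → ℝ, ContDiff ℝ 1 c → ContDiff ℝ 1 X →
        (∀ t ∈ Set.Icc (0 : ℝ) 1, X t ≠ 0) →
        (∀ t ∈ Set.Icc (0 : ℝ) 1, ∀ k, deriv (fun s => X s k) t =
          - ∑ i, ∑ j, deriv (fun s => c s i) t * X t j * Γ (c t) i j k) →
        ∀ s ∈ Set.Icc (0 : ℝ) 1, ∀ t ∈ Set.Icc (0 : ℝ) 1, F (c s, X s) = F (c t, X t)) ↔
      (∀ x y : Fin n → ℝ, y ≠ 0 → ∀ i,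
        pdx F x y i - ∑ j, ∑ k, y j * Γ x i j k * pdy F x y k = 0) :=
  ⟨ParallelTransportPreserves.isCompatible hF hΓ, IsCompatible.parallelTransportPreserves hF⟩
end

section
/- Let n ≥ 2 and let F : ℝⁿ → ℝ be positively 1-homogeneous, positive on nonzero vectors, and continuously differentiable on ℝⁿ \ {0}. Fix a nonzero v ∈ ℝⁿ which is not a vertical contact point of F and the Euclidean norm, fix real numbers c₁, …, cₙ, and suppose the set A(v) = { T torsion-type tensor : cᵢ + ⟨T, σᵢ(v)⟩ = 0 for all i = 1,…,n } is nonempty. Then A(v) is an affine subspace of the space of torsion-type tensors of dimension n·binom(n,2) − n. -/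
open Finset

/-- The inner product `⟨T, σᵢ(v)⟩ = Σ_{a<b} Σ_k T^k_{ab}·σ_{k;i}^{ab}(v)` of a torsion-type
tensor (written `T a b k` for `T^k_{ab}`) with the tensor `σᵢ(v)`. -/
noncomputable def ipSigma {n : ℕ} (F : EuclideanSpace ℝ (Fin n) → ℝ)
    (v : EuclideanSpace ℝ (Fin n)) (T : Fin n → Fin n → Fin n → ℝ) (i : Fin n) : ℝ :=
  ∑ a, ∑ b, ∑ k, if a < b then T a b k * sigmaT F v a b k i else 0

/-!
Subtracting one solution identifies `A(v)` with a translate of the kernel of `T ↦ (⟨T, σᵢ(v)⟩)ᵢ`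
on the `n·binom(n,2)`-dimensional space of torsion-type tensors, so it suffices that this map is
onto `ℝⁿ`. If `∇F(v)` were a multiple `λ v`, Euler's identity `⟨v, ∇F(v)⟩ = F(v)` would force
`λ = F(v)/‖v‖²`, making `v` a vertical contact point; hence some component `m_{pq}` of
`v ∧ ∇F(v)` is nonzero.
For `p < q` the tensor `e_p ∧ e_q ⊗ e_k` is sent to `½(m_{pq} e_k + m_{kq} e_p - m_{kp} e_q)`,
and these vectors span `ℝⁿ`.
-/

section Antisymm

variable (R ι V : Type*) [Semiring R] [AddCommGroup V] [Module R V]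

def antisymmSubmodule : Submodule R (ι → ι → V) where
  carrier := {T | ∀ a b, T a b = -T b a}
  add_mem' {S T} hS hT a b := by simp only [Pi.add_apply, hS a b, hT a b, neg_add]
  zero_mem' _ _ := by simp
  smul_mem' c T hT a b := by simp only [Pi.smul_apply, hT a b, smul_neg]

variable {R ι V}

theorem mem_antisymmSubmodule {T : ι → ι → V} :
    T ∈ antisymmSubmodule R ι V ↔ ∀ a b, T a b = -T b a := Iff.rfl

theorem single_sub_single_mem_antisymmSubmodule [DecidableEq ι] (p q : ι) (x : V) :
    Pi.single p (Pi.single q x) - Pi.single q (Pi.single p x) ∈ antisymmSubmodule R ι V := by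
  intro a b
  simp only [Pi.sub_apply, Pi.single_apply, ite_apply, Pi.zero_apply]
  split_ifs <;> simp_all

variable [LinearOrder ι]

def antisymmExtend (f : {p : ι × ι // p.1 < p.2} → V) (a b : ι) : V :=
  if h : a < b then f ⟨(a, b), h⟩ else if h' : b < a then -f ⟨(b, a), h'⟩ else 0

theorem antisymmExtend_mem (f : {p : ι × ι // p.1 < p.2} → V) :
    antisymmExtend f ∈ antisymmSubmodule R ι V := by
  intro a b
  rcases lt_trichotomy a b with h | rfl | h
  · simp [antisymmExtend, h, h.not_gt]
  · simp [antisymmExtend]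
  · simp [antisymmExtend, h, h.not_gt]

variable (R ι V) in
def antisymmEquiv [IsAddTorsionFree V] :
    antisymmSubmodule R ι V ≃ₗ[R] ({p : ι × ι // p.1 < p.2} → V) where
  toFun T p := (T : ι → ι → V) p.1.1 p.1.2
  map_add' _ _ := rfl
  map_smul' _ _ := rfl
  invFun f := ⟨antisymmExtend f, antisymmExtend_mem f⟩
  left_inv := by
    rintro ⟨T, hT⟩
    ext a b
    rcases lt_trichotomy a b with h | rfl | h
    · simp [antisymmExtend, h]
    · simpa [antisymmExtend, eq_comm] using self_eq_neg.mp (hT a a)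
    · simp [antisymmExtend, h, h.not_gt, ← hT a b]
  right_inv f := funext fun p => dif_pos p.2

theorem finrank_antisymmSubmodule {K : Type*} [Field K] [Fintype ι] [Module K V]
    [FiniteDimensional K V] [IsAddTorsionFree V] :
    Module.finrank K (antisymmSubmodule K ι V) =
      (Fintype.card ι).choose 2 * Module.finrank K V := by
  rw [(antisymmEquiv K ι V).finrank_eq, Module.finrank_pi_fintype, Finset.sum_const, smul_eq_mul,
    Finset.card_univ, Fintype.card_subtype, Fintype.card_product_filter_lt]

end Antisymm

section LinearSystem

variable {K V W : Type*} [Field K] [AddCommGroup V] [Module K V] [AddCommGroup W] [Module K W]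

theorem Submodule.finrank_inf_ker_add_finrank_range_domRestrict [FiniteDimensional K V]
    (U : Submodule K V) (f : V →ₗ[K] W) :
    Module.finrank K ↥(U ⊓ LinearMap.ker f) +
      Module.finrank K (LinearMap.range (f.domRestrict U)) = Module.finrank K U := by
  rw [← (f.domRestrict U).finrank_range_add_finrank_ker, add_comm, LinearMap.ker_domRestrict,
    ← Submodule.finrank_map_subtype_eq, Submodule.map_comap_subtype]

theorem setOf_mem_and_eq_eq_image_add {U : Submodule K V} {f : V →ₗ[K] W} {y : W} {T₀ : V}
    (hT₀U : T₀ ∈ U) (hT₀f : f T₀ = y) :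
    {T | T ∈ U ∧ f T = y} = (T₀ + ·) '' ↑(U ⊓ LinearMap.ker f) := by
  ext T
  simp only [Set.mem_ofPred_eq, Set.mem_image, SetLike.mem_coe, Submodule.mem_inf,
    LinearMap.mem_ker]
  constructor
  · rintro ⟨hTU, hTf⟩
    exact ⟨T - T₀, ⟨U.sub_mem hTU hT₀U, by rw [map_sub, hTf, hT₀f, sub_self]⟩, add_sub_cancel T₀ T⟩
  · rintro ⟨S, ⟨hSU, hSf⟩, rfl⟩
    exact ⟨U.add_mem hT₀U hSU, by rw [map_add, hSf, add_zero, hT₀f]⟩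

end LinearSystem

theorem fderiv_apply_self_of_homogeneous {E : Type*} [NormedAddCommGroup E] [NormedSpace ℝ E]
    {F : E → ℝ} {v : E} (hhom : ∀ t : ℝ, 0 < t → F (t • v) = t * F v)
    (hF : DifferentiableAt ℝ F v) : fderiv ℝ F v v = F v := by
  have hchain : HasDerivAt (fun t : ℝ => F (t • v)) (fderiv ℝ F v v) 1 := by
    have hline : HasDerivAt (fun t : ℝ => t • v) v 1 := by
      simpa using (hasDerivAt_id (1 : ℝ)).smul_const v
    have hF1 : HasFDerivAt F (fderiv ℝ F v) ((1 : ℝ) • v) := by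
      rw [one_smul]
      exact hF.hasFDerivAt
    exact hF1.comp_hasDerivAt 1 hline
  have hray : HasDerivAt (fun t : ℝ => F (t • v)) (F v) 1 := by
    have hlin : HasDerivAt (fun t : ℝ => t * F v) (F v) 1 := by
      simpa using (hasDerivAt_id (1 : ℝ)).mul_const (F v)
    refine hlin.congr_of_eventuallyEq ?_
    filter_upwards [lt_mem_nhds one_pos] with t ht
    simpa using hhom t ht
  exact hchain.unique hray

theorem ContinuousLinearMap.apply_eq_sum_coord_mul {ι : Type*} [Fintype ι] [DecidableEq ι]
    (L : EuclideanSpace ℝ ι →L[ℝ] ℝ) (v : EuclideanSpace ℝ ι) :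
    L v = ∑ r, v r * L (EuclideanSpace.single r 1) := by
  conv_lhs => rw [← (EuclideanSpace.basisFun ι ℝ).sum_repr v]
  simp [map_sum]

theorem sq_norm_mul_eq_of_wedge_eq_zero {ι : Type*} [Fintype ι] (v : EuclideanSpace ℝ ι)
    (w : ι → ℝ) (h : ∀ p q, v p * w q = v q * w p) (r : ι) :
    ‖v‖ ^ 2 * w r = (∑ p, v p * w p) * v r := by
  rw [EuclideanSpace.real_norm_sq_eq, Finset.sum_mul, Finset.sum_mul]
  refine Finset.sum_congr rfl fun p _ => ?_
  linear_combination v p * h p r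

section Torsion

variable {n : ℕ} (F : EuclideanSpace ℝ (Fin n) → ℝ) (v : EuclideanSpace ℝ (Fin n))

/-- `m_{ab}`, the components of `v ∧ ∇F(v)`. -/
noncomputable def gradWedge (a b : Fin n) : ℝ := v a * pd F v b - v b * pd F v a

theorem exists_lt_gradWedge_ne_zero (hhom : ∀ t : ℝ, 0 < t → F (t • v) = t * F v)
    (hF : DifferentiableAt ℝ F v) (hv : v ≠ 0)
    (hnvc : ¬ ∀ r, pd F v r = (F v / ‖v‖ ^ 2) * v r) :
    ∃ p q, p < q ∧ gradWedge F v p q ≠ 0 := by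
  by_contra! h
  simp only [gradWedge, sub_eq_zero] at h
  have hwedge : ∀ p q, v p * pd F v q = v q * pd F v p := by
    intro p q
    rcases lt_trichotomy p q with hpq | rfl | hqp
    · exact h p q hpq
    · rfl
    · exact (h q p hqp).symm
  have heuler : ∑ r, v r * pd F v r = F v := by
    rw [← fderiv_apply_self_of_homogeneous hhom hF,
      ContinuousLinearMap.apply_eq_sum_coord_mul (fderiv ℝ F v) v]
    rfl
  have hnorm : ‖v‖ ^ 2 ≠ 0 := by positivity
  refine hnvc fun r => ?_
  rw [div_mul_eq_mul_div, eq_div_iff hnorm, mul_comm, ← heuler]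
  exact sq_norm_mul_eq_of_wedge_eq_zero v _ hwedge r

theorem sigmaT_eq_gradWedge (a b c i : Fin n) :
    sigmaT F v a b c i = (1 / 2) * ((if i = c then 1 else 0) * gradWedge F v a b
      + (if i = a then 1 else 0) * gradWedge F v c b
      - (if i = b then 1 else 0) * gradWedge F v c a) := rfl

/-- With `σₖ = σ_{k;·}^{pq}(v)` and `m = gradWedge F v`, one has `σ_p = m_{pq} e_p` and
`σ_q = m_{pq} e_q`, and `σ_k - ½ m_{pq} e_k` lies in their span. -/
theorem single_eq_sigmaT_combination {p q : Fin n} (hM : gradWedge F v p q ≠ 0) (k : Fin n) :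
    (Pi.single k 1 : Fin n → ℝ) =
      (2 / gradWedge F v p q) • (fun i => sigmaT F v p q k i)
        - (gradWedge F v k q / gradWedge F v p q ^ 2) • (fun i => sigmaT F v p q p i)
        + (gradWedge F v k p / gradWedge F v p q ^ 2) • (fun i => sigmaT F v p q q i) := by
  have hpq : p ≠ q := by rintro rfl; simp [gradWedge] at hM
  have hanti : ∀ a b, gradWedge F v b a = -gradWedge F v a b := fun a b => by
    simp only [gradWedge]; ring
  ext i
  simp only [Pi.add_apply, Pi.sub_apply, Pi.smul_apply, smul_eq_mul, sigmaT_eq_gradWedge,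
    Pi.single_apply, hanti q p]
  split_ifs <;> simp_all [gradWedge] <;> field_simp <;> ring

theorem ipSigma_eq_sum_mul (T : Fin n → Fin n → Fin n → ℝ) (i : Fin n) :
    ipSigma F v T i = ∑ a, ∑ b, ∑ k, T a b k * if a < b then sigmaT F v a b k i else 0 := by
  simp only [ipSigma, mul_ite, mul_zero]

@[simps]
noncomputable def ipSigmaLinear : (Fin n → Fin n → Fin n → ℝ) →ₗ[ℝ] (Fin n → ℝ) where
  toFun T := ipSigma F v T
  map_add' S T := by
    ext i
    simp only [ipSigma_eq_sum_mul, Pi.add_apply, add_mul, Finset.sum_add_distrib]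
  map_smul' c T := by
    ext i
    simp only [ipSigma_eq_sum_mul, Pi.smul_apply, smul_eq_mul, Finset.mul_sum, mul_assoc,
      RingHom.id_apply]

theorem ipSigma_single_sub_single {p q : Fin n} (hpq : p < q) (k : Fin n) :
    ipSigma F v (Pi.single p (Pi.single q (Pi.single k 1)) - Pi.single q (Pi.single p
      (Pi.single k 1))) = fun i => sigmaT F v p q k i := by
  ext i
  simp only [ipSigma_eq_sum_mul, Pi.sub_apply, sub_mul, Finset.sum_sub_distrib, Pi.single_apply,
    ite_apply, Pi.zero_apply, ite_mul, one_mul, zero_mul]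
  simp [hpq, hpq.not_gt]

theorem range_ipSigmaLinear_domRestrict_eq_top {p q : Fin n} (hpq : p < q)
    (hM : gradWedge F v p q ≠ 0) :
    LinearMap.range ((ipSigmaLinear F v).domRestrict
      (antisymmSubmodule ℝ (Fin n) (Fin n → ℝ))) = ⊤ := by
  set R := LinearMap.range ((ipSigmaLinear F v).domRestrict
    (antisymmSubmodule ℝ (Fin n) (Fin n → ℝ)))
  have hσ : ∀ k, (fun i => sigmaT F v p q k i) ∈ R := fun k =>
    ⟨⟨_, single_sub_single_mem_antisymmSubmodule p q (Pi.single k 1)⟩,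
      ipSigma_single_sub_single F v hpq k⟩
  rw [eq_top_iff, ← (Pi.basisFun ℝ (Fin n)).span_eq, Submodule.span_le]
  rintro _ ⟨k, rfl⟩
  rw [Pi.basisFun_apply, single_eq_sigmaT_combination F v hM k]
  exact R.add_mem (R.sub_mem (R.smul_mem _ (hσ k)) (R.smul_mem _ (hσ p))) (R.smul_mem _ (hσ q))

end Torsion

theorem reference_affine_subspace_dim_general {n : ℕ}
    (F : EuclideanSpace ℝ (Fin n) → ℝ)
    (hhom : ∀ t : ℝ, 0 < t → ∀ v, F (t • v) = t * F v)
    (hdiff : ContDiffOn ℝ 1 F {(0 : EuclideanSpace ℝ (Fin n))}ᶜ)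
    (v : EuclideanSpace ℝ (Fin n)) (hv : v ≠ 0)
    (hnvc : ¬ ∀ r, pd F v r = (F v / ‖v‖ ^ 2) * v r)
    (c : Fin n → ℝ)
    (A : Set (Fin n → Fin n → Fin n → ℝ))
    (hA : A = {T | (∀ a b k, T a b k = - T b a k) ∧ ∀ i, c i + ipSigma F v T i = 0})
    (hne : A.Nonempty) :
    ∃ H : Submodule ℝ (Fin n → Fin n → Fin n → ℝ),
      (H : Set (Fin n → Fin n → Fin n → ℝ)) =
        {S | (∀ a b k, S a b k = - S b a k) ∧ ∀ i, ipSigma F v S i = 0} ∧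
      Module.finrank ℝ H = n * n.choose 2 - n ∧
      ∃ T0 ∈ A, A = (fun S => T0 + S) '' (H : Set (Fin n → Fin n → Fin n → ℝ)) := by
  have hF : DifferentiableAt ℝ F v :=
    (hdiff.differentiableOn one_ne_zero).differentiableAt (isOpen_compl_singleton.mem_nhds hv)
  obtain ⟨p, q, hpq, hM⟩ := exists_lt_gradWedge_ne_zero F v (fun t ht => hhom t ht v) hF hv hnvc
  set U := antisymmSubmodule ℝ (Fin n) (Fin n → ℝ)
  set Φ := ipSigmaLinear F v
  have hA' : A = {T | T ∈ U ∧ Φ T = -c} := by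
    ext T
    simp [hA, U, Φ, mem_antisymmSubmodule, funext_iff, eq_neg_iff_add_eq_zero, add_comm]
  refine ⟨U ⊓ LinearMap.ker Φ, ?_, ?_, ?_⟩
  · ext S
    simp [U, Φ, mem_antisymmSubmodule, funext_iff]
  · have hrank := U.finrank_inf_ker_add_finrank_range_domRestrict Φ
    rw [range_ipSigmaLinear_domRestrict_eq_top F v hpq hM, finrank_top,
      finrank_antisymmSubmodule, Module.finrank_fin_fun, Fintype.card_fin, mul_comm] at hrank
    omega
  · obtain ⟨T₀, hT₀⟩ := hne
    refine ⟨T₀, hT₀, ?_⟩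
    rw [hA'] at hT₀ ⊢
    exact setOf_mem_and_eq_eq_image_add hT₀.1 hT₀.2

/-- If `v ≠ 0` is not a vertical contact point and the solution set
`A(v) = {T : cᵢ + ⟨T, σᵢ(v)⟩ = 0 for all i}` of the compatibility system with reference
element `v` is nonempty, then `A(v)` is an affine subspace of the space of torsion-type
tensors of dimension `n·binom(n,2) − n`. -/
theorem reference_affine_subspace_dim {n : ℕ} (hn : 2 ≤ n)
    (F : EuclideanSpace ℝ (Fin n) → ℝ)
    (hhom : ∀ t : ℝ, 0 < t → ∀ v, F (t • v) = t * F v)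
    (hpos : ∀ v : EuclideanSpace ℝ (Fin n), v ≠ 0 → 0 < F v)
    (hdiff : ContDiffOn ℝ 1 F {(0 : EuclideanSpace ℝ (Fin n))}ᶜ)
    (v : EuclideanSpace ℝ (Fin n)) (hv : v ≠ 0)
    (hnvc : ¬ ∀ r, pd F v r = (F v / ‖v‖ ^ 2) * v r)
    (c : Fin n → ℝ)
    (A : Set (Fin n → Fin n → Fin n → ℝ))
    (hA : A = {T | (∀ a b k, T a b k = - T b a k) ∧ ∀ i, c i + ipSigma F v T i = 0})
    (hne : A.Nonempty) :
    ∃ H : Submodule ℝ (Fin n → Fin n → Fin n → ℝ),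
      (H : Set (Fin n → Fin n → Fin n → ℝ)) =
        {S | (∀ a b k, S a b k = - S b a k) ∧ ∀ i, ipSigma F v S i = 0} ∧
      Module.finrank ℝ H = n * n.choose 2 - n ∧
      ∃ T0 ∈ A, A = (fun S => T0 + S) '' (H : Set (Fin n → Fin n → Fin n → ℝ)) :=
  reference_affine_subspace_dim_general F hhom hdiff v hv hnvc c A hA hne
end
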